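/- arXiv:1401.0203 — 4 statements merged into one kernel-verified Lean document; each statement's English description precedes it below -/
import Mathlib

section
/- For every integer $n \ge 1$, the constant $\lambda_n = \frac{(n-1)\Gamma(1+n/2)}{n^{3/2}\sqrt{\pi}\,\Gamma(1/2+n/2)}$ satisfies $\lambda_n \le 1/\sqrt{2\pi}$. -/
open Real

theorem stmt2 (n : ℕ) (hn : 1 ≤ n) :
    ((n : ℝ) - 1) * Real.Gamma (1 + n / 2) /
        ((n : ℝ) ^ ((3 : ℝ) / 2) * Real.sqrt π * Real.Gamma (1 / 2 + n / 2)) ≤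
      1 / Real.sqrt (2 * π) := by
  have hn1 : (1 : ℝ) ≤ (n : ℝ) := by exact_mod_cast hn
  have hx : (0 : ℝ) < 1 / 2 + (n : ℝ) / 2 := by linarith
  have hG : (0 : ℝ) < Real.Gamma (1 / 2 + (n : ℝ) / 2) := Real.Gamma_pos_of_pos hx
  -- log-convexity step
  have key : Real.Gamma (1 + (n : ℝ) / 2) ≤
      Real.Gamma (1 / 2 + (n : ℝ) / 2) * Real.sqrt (1 / 2 + (n : ℝ) / 2) := by
    have h := Real.Gamma_mul_add_mul_le_rpow_Gamma_mul_rpow_Gamma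
      (s := 1 / 2 + (n : ℝ) / 2) (t := 3 / 2 + (n : ℝ) / 2) (a := 1 / 2) (b := 1 / 2)
      hx (by linarith) (by norm_num) (by norm_num) (by norm_num)
    have e1 : (1 / 2 : ℝ) * (1 / 2 + (n : ℝ) / 2) + 1 / 2 * (3 / 2 + (n : ℝ) / 2)
        = 1 + (n : ℝ) / 2 := by ring
    have e2 : Real.Gamma (3 / 2 + (n : ℝ) / 2)
        = (1 / 2 + (n : ℝ) / 2) * Real.Gamma (1 / 2 + (n : ℝ) / 2) := by
      have := Real.Gamma_add_one (s := 1 / 2 + (n : ℝ) / 2) (ne_of_gt hx)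
      rw [show (3 / 2 + (n : ℝ) / 2) = (1 / 2 + (n : ℝ) / 2) + 1 by ring, this]
    rw [e1, e2] at h
    calc Real.Gamma (1 + (n : ℝ) / 2)
        ≤ Real.Gamma (1 / 2 + (n : ℝ) / 2) ^ ((1 : ℝ) / 2) *
          ((1 / 2 + (n : ℝ) / 2) * Real.Gamma (1 / 2 + (n : ℝ) / 2)) ^ ((1 : ℝ) / 2) := h
      _ = Real.Gamma (1 / 2 + (n : ℝ) / 2) * Real.sqrt (1 / 2 + (n : ℝ) / 2) := by
          simp only [Real.mul_rpow hx.le hG.le, ← Real.sqrt_eq_rpow]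
          rw [show Real.sqrt (Real.Gamma (1 / 2 + (n : ℝ) / 2)) *
              (Real.sqrt (1 / 2 + (n : ℝ) / 2) * Real.sqrt (Real.Gamma (1 / 2 + (n : ℝ) / 2))) =
              Real.sqrt (Real.Gamma (1 / 2 + (n : ℝ) / 2)) *
              Real.sqrt (Real.Gamma (1 / 2 + (n : ℝ) / 2)) * Real.sqrt (1 / 2 + (n : ℝ) / 2)
            from by ring, Real.mul_self_sqrt hG.le]
  -- arithmetic step
  have hπ : (0 : ℝ) < π := Real.pi_pos
  have h2π : (0 : ℝ) < Real.sqrt (2 * π) := Real.sqrt_pos.mpr (by positivity)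
  have hnp : (0 : ℝ) < (n : ℝ) ^ ((3 : ℝ) / 2) := Real.rpow_pos_of_pos (by linarith) _
  have hden : (0 : ℝ) < (n : ℝ) ^ ((3 : ℝ) / 2) * Real.sqrt π * Real.Gamma (1 / 2 + (n : ℝ) / 2) := by
    have := Real.sqrt_pos.mpr hπ; positivity
  rw [div_le_div_iff₀ hden h2π]
  have hnn : (0 : ℝ) ≤ (n : ℝ) - 1 := by linarith
  -- (n-1) * √((n+1)/2) * √(2π) ≤ n^{3/2} * √π
  have hmain : ((n : ℝ) - 1) * Real.sqrt (1 / 2 + (n : ℝ) / 2) * Real.sqrt (2 * π)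
      ≤ (n : ℝ) ^ ((3 : ℝ) / 2) * Real.sqrt π := by
    have e3 : Real.sqrt (1 / 2 + (n : ℝ) / 2) * Real.sqrt (2 * π)
        = Real.sqrt ((n : ℝ) + 1) * Real.sqrt π := by
      rw [← Real.sqrt_mul (by linarith), ← Real.sqrt_mul (by linarith)]
      ring_nf
    rw [mul_assoc, e3, ← mul_assoc]
    have e4 : (n : ℝ) ^ ((3 : ℝ) / 2) = Real.sqrt ((n : ℝ) ^ 3) := by
      rw [Real.sqrt_eq_rpow, ← Real.rpow_natCast ((n:ℝ)) 3, ← Real.rpow_mul (by linarith)]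
      norm_num
    rw [e4]
    gcongr
    have : ((n : ℝ) - 1) * Real.sqrt ((n : ℝ) + 1)
        = Real.sqrt (((n : ℝ) - 1) ^ 2 * ((n : ℝ) + 1)) := by
      rw [Real.sqrt_mul (by positivity), Real.sqrt_sq hnn]
    rw [this]
    apply Real.sqrt_le_sqrt
    nlinarith
  calc ((n : ℝ) - 1) * Real.Gamma (1 + (n : ℝ) / 2) * Real.sqrt (2 * π)
      ≤ ((n : ℝ) - 1) * (Real.Gamma (1 / 2 + (n : ℝ) / 2) * Real.sqrt (1 / 2 + (n : ℝ) / 2)) *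
        Real.sqrt (2 * π) := by gcongr
    _ = (((n : ℝ) - 1) * Real.sqrt (1 / 2 + (n : ℝ) / 2) * Real.sqrt (2 * π)) *
        Real.Gamma (1 / 2 + (n : ℝ) / 2) := by ring
    _ ≤ ((n : ℝ) ^ ((3 : ℝ) / 2) * Real.sqrt π) * Real.Gamma (1 / 2 + (n : ℝ) / 2) := by
        gcongr
    _ = 1 * ((n : ℝ) ^ ((3 : ℝ) / 2) * Real.sqrt π * Real.Gamma (1 / 2 + (n : ℝ) / 2)) := by ring
end

section
/- Let $f : \mathbb{R} \to (0,\infty)$ be a continuous, log-concave probability density with cumulative distribution function $F(t) = \int_{-\infty}^t f$, which is strictly increasing with inverse $F^{-1} : (0,1) \to \mathbb{R}$. Then the function $\psi = f \circ F^{-1} : (0,1) \to (0,\infty)$ is concave. -/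
open Real MeasureTheory

/-! For `A ≤ B ≤ C` and `ψ = f ∘ F⁻¹`, concavity of `ψ` at the points `F A < F B < F C` reads
`f A * ∫_B^C f + f C * ∫_A^B f ≤ f B * ∫_A^C f`. Split `∫_A^C f` at `A + C - B` into two intervals
of lengths `B - A` and `C - B`; translating them onto `[B, C]` and `[A, B]`, the inequality follows
termwise from log-concavity in the form `f x * f (p + q - x) ≤ f p * f q` for `x ≤ p, q`: the
product of `f` at two points with fixed sum can only grow as the points move together. -/

theorem ConcaveOn.add_le_add_of_le {s : Set ℝ} {g : ℝ → ℝ} (hg : ConcaveOn ℝ s g)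
    {x p q : ℝ} (hx : x ∈ s) (hy : p + q - x ∈ s) (hp : x ≤ p) (hq : x ≤ q) :
    g x + g (p + q - x) ≤ g p + g q := by
  set y := p + q - x
  rcases (hp.trans (by linarith : p ≤ y)).eq_or_lt with hxy | hxy
  · obtain rfl : p = x := by linarith
    obtain rfl : q = p := by linarith
    simp [y]
  have hyx : y - x ≠ 0 := (sub_pos.2 hxy).ne'
  have ha : 0 ≤ (y - p) / (y - x) := div_nonneg (by linarith) (by linarith)
  have hb : 0 ≤ (p - x) / (y - x) := div_nonneg (by linarith) (by linarith)
  have hab : (y - p) / (y - x) + (p - x) / (y - x) = 1 := by field_simp; ring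
  have hgp := hg.2 hx hy ha hb hab
  have hgq := hg.2 hx hy hb ha (by rw [add_comm, hab])
  have ep : (y - p) / (y - x) * x + (p - x) / (y - x) * y = p := by field_simp; ring
  have eq : (p - x) / (y - x) * x + (y - p) / (y - x) * y = q := by field_simp; ring
  simp only [smul_eq_mul, ep, eq] at hgp hgq
  linear_combination hgp + hgq - (g x + g y) * hab

theorem mul_le_mul_of_concaveOn_log {f : ℝ → ℝ} (hf_pos : ∀ x, 0 < f x)
    (hf : ConcaveOn ℝ Set.univ fun x => log (f x)) {x p q : ℝ} (hp : x ≤ p) (hq : x ≤ q) :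
    f x * f (p + q - x) ≤ f p * f q := by
  have hfx := hf_pos x
  have hfy := hf_pos (p + q - x)
  have hfp := hf_pos p
  have hfq := hf_pos q
  rw [← log_le_log_iff (by positivity) (by positivity), log_mul hfx.ne' hfy.ne',
    log_mul hfp.ne' hfq.ne']
  exact hf.add_le_add_of_le (Set.mem_univ _) (Set.mem_univ _) hp hq

section IntervalIntegral

variable {f : ℝ → ℝ} {A B C : ℝ}

open intervalIntegral

theorem mul_integral_le_of_concaveOn_log_left (hf_pos : ∀ x, 0 < f x)
    (hf : ConcaveOn ℝ Set.univ fun x => log (f x)) (hf_int : Integrable f)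
    (hAB : A ≤ B) (hBC : B ≤ C) :
    f A * ∫ t in B..C, f t ≤ f B * ∫ t in A..A + C - B, f t := by
  have hshift : ∫ t in B..C, f t = ∫ t in A..A + C - B, f (t + (B - A)) := by
    rw [integral_comp_add_right]
    congr 1 <;> ring
  rw [hshift, ← intervalIntegral.integral_const_mul,
    ← intervalIntegral.integral_const_mul]
  refine integral_mono_on (by linarith) ?_ ?_ fun t ht => ?_
  · exact ((hf_int.comp_add_right _).intervalIntegrable).const_mul _
  · exact hf_int.intervalIntegrable.const_mul _
  · convert mul_le_mul_of_concaveOn_log hf_pos hf hAB ht.1 using 3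
    ring

theorem mul_integral_le_of_concaveOn_log_right (hf_pos : ∀ x, 0 < f x)
    (hf : ConcaveOn ℝ Set.univ fun x => log (f x)) (hf_int : Integrable f)
    (hAB : A ≤ B) (hBC : B ≤ C) :
    f C * ∫ t in A..B, f t ≤ f B * ∫ t in A + C - B..C, f t := by
  have hshift : ∫ t in A + C - B..C, f t = ∫ t in A..B, f (t + (C - B)) := by
    rw [integral_comp_add_right]
    congr 1 <;> ring
  rw [hshift, ← intervalIntegral.integral_const_mul,
    ← intervalIntegral.integral_const_mul]
  refine integral_mono_on hAB ?_ ?_ fun t ht => ?_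
  · exact hf_int.intervalIntegrable.const_mul _
  · exact ((hf_int.comp_add_right _).intervalIntegrable).const_mul _
  · rw [mul_comm]
    convert mul_le_mul_of_concaveOn_log hf_pos hf ht.2 (by linarith : t ≤ t + (C - B)) using 3
    ring

theorem mul_integral_add_mul_integral_le_of_concaveOn_log (hf_pos : ∀ x, 0 < f x)
    (hf : ConcaveOn ℝ Set.univ fun x => log (f x)) (hf_int : Integrable f)
    (hAB : A ≤ B) (hBC : B ≤ C) :
    f A * (∫ t in B..C, f t) + f C * ∫ t in A..B, f t ≤ f B * ∫ t in A..C, f t := by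
  rw [← integral_add_adjacent_intervals (a := A) (b := A + C - B) (c := C)
    hf_int.intervalIntegrable hf_int.intervalIntegrable, mul_add]
  exact add_le_add (mul_integral_le_of_concaveOn_log_left hf_pos hf hf_int hAB hBC)
    (mul_integral_le_of_concaveOn_log_right hf_pos hf hf_int hAB hBC)

end IntervalIntegral

theorem stmt7_general (f : ℝ → ℝ) (hf_pos : ∀ x, 0 < f x)
    (hf_int : Integrable f)
    (hf_logconcave : ConcaveOn ℝ Set.univ fun x => Real.log (f x))
    (F : ℝ → ℝ) (hF : ∀ t, F t = ∫ x in Set.Iic t, f x)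
    (hF_mono : StrictMono F)
    (Finv : ℝ → ℝ) (hFinv : ∀ s ∈ Set.Ioo (0 : ℝ) 1, F (Finv s) = s) :
    ConcaveOn ℝ (Set.Ioo (0 : ℝ) 1) fun s => f (Finv s) := by
  have hF_sub (a b : ℝ) : F b - F a = ∫ t in a..b, f t := by
    rw [hF, hF, intervalIntegral.integral_Iic_sub_Iic hf_int.integrableOn hf_int.integrableOn]
  refine concaveOn_of_slope_anti_adjacent (convex_Ioo 0 1) fun {x y z} hx hz hxy hyz => ?_
  have hy : y ∈ Set.Ioo (0 : ℝ) 1 := ⟨hx.1.trans hxy, hyz.trans hz.2⟩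
  have hXY : Finv x ≤ Finv y := by
    rw [← hF_mono.le_iff_le, hFinv x hx, hFinv y hy]; exact hxy.le
  have hYZ : Finv y ≤ Finv z := by
    rw [← hF_mono.le_iff_le, hFinv y hy, hFinv z hz]; exact hyz.le
  have key := mul_integral_add_mul_integral_le_of_concaveOn_log hf_pos hf_logconcave hf_int hXY hYZ
  rw [← hF_sub, ← hF_sub, ← hF_sub, hFinv x hx, hFinv y hy, hFinv z hz] at key
  rw [div_le_div_iff₀ (sub_pos.2 hyz) (sub_pos.2 hxy)]
  linear_combination key

/-- If `f` is a continuous, positive, log-concave probability density with strictly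
increasing CDF `F` and inverse `Finv` on `(0,1)`, then `f ∘ F⁻¹` is concave on `(0,1)`. -/
theorem stmt7 (f : ℝ → ℝ) (hf_cont : Continuous f) (hf_pos : ∀ x, 0 < f x)
    (hf_int : Integrable f) (hf_prob : ∫ x, f x = 1)
    (hf_logconcave : ConcaveOn ℝ Set.univ fun x => Real.log (f x))
    (F : ℝ → ℝ) (hF : ∀ t, F t = ∫ x in Set.Iic t, f x)
    (hF_mono : StrictMono F)
    (Finv : ℝ → ℝ) (hFinv : ∀ s ∈ Set.Ioo (0 : ℝ) 1, F (Finv s) = s) :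
    ConcaveOn ℝ (Set.Ioo (0 : ℝ) 1) fun s => f (Finv s) :=
  stmt7_general f hf_pos hf_int hf_logconcave F hF hF_mono Finv hFinv
end

section
/- Let $n \ge 3$ and let $\Phi_n$ be the cumulative distribution function of the density $\phi_n(t) = \lambda_n(1-t^2/n)^{(n-3)/2}$ on $[-\sqrt n, \sqrt n]$, with $\lambda_n \ge 1/\sqrt{4\pi}$. Then for all $0 < a < b < 1/2$, $|\Phi_n^{-1}(b) - \Phi_n^{-1}(a)| \le \sqrt{\pi}\,\ln(b/a)$. -/
open Real

set_option maxHeartbeats 1000000 in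
/-- Logarithmic Lipschitz estimate for the quantile function `Φ_n⁻¹`. -/
theorem stmt9 (n : ℕ) (hn : 3 ≤ n) (lam : ℝ)
    (hlam : lam = (∫ u in (-Real.sqrt n)..(Real.sqrt n),
        (1 - u ^ 2 / n) ^ (((n : ℝ) - 3) / 2))⁻¹)
    (hlam_ge : lam ≥ 1 / Real.sqrt (4 * π))
    (Φ : ℝ → ℝ)
    (hΦ : ∀ t, Φ t = lam * ∫ u in (-Real.sqrt n)..t, (1 - u ^ 2 / n) ^ (((n : ℝ) - 3) / 2))
    (Φinv : ℝ → ℝ)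
    (hΦinv_mem : ∀ s ∈ Set.Ioo (0 : ℝ) 1, Φinv s ∈ Set.Ioo (-Real.sqrt n) (Real.sqrt n))
    (hΦinv : ∀ s ∈ Set.Ioo (0 : ℝ) 1, Φ (Φinv s) = s) :
    ∀ a b : ℝ, 0 < a → a < b → b < 1 / 2 →
      |Φinv b - Φinv a| ≤ Real.sqrt π * Real.log (b / a) := by
  intro a b ha hab hb2
  set N : ℝ := Real.sqrt n with hNdef
  set p : ℝ := ((n : ℝ) - 3) / 2 with hpdef
  set g : ℝ → ℝ := fun u => (1 - u ^ 2 / (n : ℝ)) ^ p with hgdef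
  have hn3 : (3 : ℝ) ≤ (n : ℝ) := by exact_mod_cast hn
  have hnpos : (0 : ℝ) < n := by linarith
  have hp : 0 ≤ p := by rw [hpdef]; linarith
  have hN : 0 < N := Real.sqrt_pos.mpr hnpos
  have hNsq : N ^ 2 = n := Real.sq_sqrt hnpos.le
  have hπ : 0 < π := Real.pi_pos
  have hsπ : 0 < Real.sqrt π := Real.sqrt_pos.mpr hπ
  have hlam_pos : 0 < lam := lt_of_lt_of_le (by positivity) hlam_ge
  have hhalf : 1 / 2 ≤ Real.sqrt π * lam := by
    have h4 : Real.sqrt (4 * π) = 2 * Real.sqrt π := by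
      rw [show (4:ℝ) * π = (2 * Real.sqrt π) ^ 2 by
        rw [mul_pow, Real.sq_sqrt hπ.le]; norm_num]
      exact Real.sqrt_sq (by positivity)
    rw [h4] at hlam_ge
    have h5 := mul_le_mul_of_nonneg_left hlam_ge hsπ.le
    have h6 : Real.sqrt π * (1 / (2 * Real.sqrt π)) = 1 / 2 := by
      field_simp
    linarith
  have base_pos : ∀ u : ℝ, -N < u → u < N → 0 < 1 - u ^ 2 / (n : ℝ) := by
    intro u h1 h2
    have hu : u ^ 2 < N ^ 2 := sq_lt_sq' h1 h2
    rw [hNsq] at hu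
    have := (div_lt_one hnpos).mpr hu
    linarith
  have base_nonneg : ∀ u : ℝ, -N ≤ u → u ≤ N → 0 ≤ 1 - u ^ 2 / (n : ℝ) := by
    intro u h1 h2
    have hu : u ^ 2 ≤ N ^ 2 := sq_le_sq' h1 h2
    rw [hNsq] at hu
    have := (div_le_one hnpos).mpr hu
    linarith
  have g_nonneg : ∀ u : ℝ, -N ≤ u → u ≤ N → 0 ≤ g u :=
    fun u h1 h2 => Real.rpow_nonneg (base_nonneg u h1 h2) p
  have g_pos : ∀ u : ℝ, -N < u → u < N → 0 < g u :=
    fun u h1 h2 => Real.rpow_pos_of_pos (base_pos u h1 h2) p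
  have g_cont : Continuous g :=
    (Real.continuous_rpow_const hp).comp (by continuity)
  have g_int : ∀ x y : ℝ, IntervalIntegrable g MeasureTheory.volume x y :=
    fun x y => g_cont.intervalIntegrable x y
  have hΦfun : Φ = fun t => lam * ∫ u in (-N)..t, g u := funext hΦ
  have hΦd : ∀ t : ℝ, HasDerivAt Φ (lam * g t) t := by
    intro t
    rw [hΦfun]
    exact (intervalIntegral.integral_hasDerivAt_right (g_int _ _)
      (g_cont.stronglyMeasurableAtFilter _ _) g_cont.continuousAt).const_mul lam
  have hΦcont : Continuous Φ := by
    rw [continuous_iff_continuousAt]; exact fun t => (hΦd t).continuousAt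
  have hΦmono : MonotoneOn Φ (Set.Icc (-N) N) := by
    intro x hx y hy hxy
    rw [hΦ x, hΦ y]
    have hsub : (∫ u in (-N)..y, g u) - (∫ u in (-N)..x, g u) = ∫ u in x..y, g u :=
      intervalIntegral.integral_interval_sub_left (g_int _ _) (g_int _ _)
    have hnn : 0 ≤ ∫ u in x..y, g u :=
      intervalIntegral.integral_nonneg hxy
        (fun u hu => g_nonneg u (le_trans hx.1 hu.1) (le_trans hu.2 hy.2))
    nlinarith [hlam_pos]
  have hΦNeg : Φ (-N) = 0 := by rw [hΦ]; simp
  have hI_pos : 0 < ∫ u in (-N)..N, g u :=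
    intervalIntegral.intervalIntegral_pos_of_pos_on (g_int _ _)
      (fun u hu => g_pos u hu.1 hu.2) (by linarith)
  have hlamI : lam * ∫ u in (-N)..N, g u = 1 := by
    rw [hlam]; exact inv_mul_cancel₀ hI_pos.ne'
  have hgeven : ∀ u : ℝ, g (-u) = g u := by
    intro u; simp only [hgdef, neg_sq]
  have hsymm : (∫ u in (-N)..(0:ℝ), g u) = ∫ u in (0:ℝ)..N, g u := by
    have h := intervalIntegral.integral_comp_neg (f := g) (a := (0:ℝ)) (b := N)
    simp only [neg_zero, hgeven] at h
    exact h.symm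
  have hsplit : (∫ u in (-N)..N, g u) = (∫ u in (-N)..(0:ℝ), g u) + ∫ u in (0:ℝ)..N, g u :=
    (intervalIntegral.integral_add_adjacent_intervals (g_int _ _) (g_int _ _)).symm
  have hΦ0 : Φ 0 = 1 / 2 := by
    rw [hΦ]
    have hhalfI : (∫ u in (-N)..(0:ℝ), g u) = (∫ u in (-N)..N, g u) / 2 := by
      rw [hsplit, ← hsymm]; ring
    rw [hhalfI]
    rw [show lam * ((∫ u in (-N)..N, g u) / 2) = (lam * ∫ u in (-N)..N, g u) / 2 by ring, hlamI]
  -- derivative of g at interior points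
  have hgderiv : ∀ u : ℝ, -N < u → u < N →
      HasDerivAt g (-(2 * u) / (n : ℝ) * p * (1 - u ^ 2 / (n : ℝ)) ^ (p - 1)) u := by
    intro u h1 h2
    have hb := base_pos u h1 h2
    have hinner : HasDerivAt (fun u : ℝ => 1 - u ^ 2 / (n : ℝ)) (-(2 * u) / (n : ℝ)) u := by
      have hpow : HasDerivAt (fun u : ℝ => u ^ 2) (2 * u) u := by
        simpa using hasDerivAt_pow 2 u
      simpa [neg_div] using (hpow.div_const (n : ℝ)).const_sub 1
    exact hinner.rpow_const (Or.inl hb.ne')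
  set h : ℝ → ℝ := fun t => g t - 2 * Φ t with hhdef
  have hhd : ∀ u : ℝ, -N < u → u < N →
      HasDerivAt h (-(2 * u) / (n : ℝ) * p * (1 - u ^ 2 / (n : ℝ)) ^ (p - 1) - 2 * (lam * g u)) u :=
    fun u h1 h2 => (hgderiv u h1 h2).sub ((hΦd u).const_mul 2)
  have hhcont : Continuous h := g_cont.sub (continuous_const.mul hΦcont)
  have hDval : ∀ u : ℝ, -N < u → u < N →
      deriv h u = (1 - u ^ 2 / (n : ℝ)) ^ (p - 1) *
        ((2 * lam * u ^ 2 - 2 * p * u - 2 * lam * (n : ℝ)) / (n : ℝ)) := by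
    intro u h1 h2
    have hb := base_pos u h1 h2
    have hd := (hhd u h1 h2).deriv
    have hBp := Real.rpow_add_one hb.ne' (p - 1)
    rw [show p - 1 + 1 = p from by ring] at hBp
    rw [hd]
    simp only [hgdef]
    rw [hBp]
    field_simp
    ring
  have hQmono : ∀ u v : ℝ, u ≤ v → v ≤ 0 →
      2 * lam * v ^ 2 - 2 * p * v - 2 * lam * (n : ℝ) ≤
        2 * lam * u ^ 2 - 2 * p * u - 2 * lam * (n : ℝ) := by
    intro u v huv hv0
    have h1 : (0:ℝ) ≤ 2 * p - 2 * lam * (u + v) := by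
      nlinarith [mul_nonneg hlam_pos.le (by linarith : (0:ℝ) ≤ -(u + v))]
    nlinarith [mul_nonneg (sub_nonneg.mpr huv) h1]
  have key : ∀ t : ℝ, -N ≤ t → t ≤ 0 → 2 * Φ t ≤ g t := by
    intro t htN ht0
    rcases le_or_gt 0 (2 * lam * t ^ 2 - 2 * p * t - 2 * lam * (n : ℝ)) with hQ | hQ
    · have hmono : MonotoneOn h (Set.Icc (-N) t) := by
        apply monotoneOn_of_deriv_nonneg (convex_Icc _ _) hhcont.continuousOn
        · intro x hx
          rw [interior_Icc] at hx
          exact (hhd x hx.1 (by linarith [hx.2])).differentiableAt.differentiableWithinAt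
        · intro x hx
          rw [interior_Icc] at hx
          rw [hDval x hx.1 (by linarith [hx.2])]
          have hQx : 0 ≤ 2 * lam * x ^ 2 - 2 * p * x - 2 * lam * (n : ℝ) :=
            le_trans hQ (hQmono x t hx.2.le ht0)
          have hB : (0:ℝ) ≤ (1 - x ^ 2 / (n : ℝ)) ^ (p - 1) :=
            Real.rpow_nonneg (base_nonneg x hx.1.le (by linarith [hx.2])) _
          exact mul_nonneg hB (div_nonneg hQx hnpos.le)
      have hle := hmono (Set.left_mem_Icc.mpr htN) (Set.right_mem_Icc.mpr htN) htN
      have hgNn : 0 ≤ g (-N) := g_nonneg _ le_rfl (by linarith)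
      simp only [hhdef] at hle
      rw [hΦNeg] at hle
      linarith
    · have hanti : AntitoneOn h (Set.Icc t 0) := by
        apply antitoneOn_of_deriv_nonpos (convex_Icc _ _) hhcont.continuousOn
        · intro x hx
          rw [interior_Icc] at hx
          exact (hhd x (by linarith [hx.1]) (by linarith [hx.2])).differentiableAt.differentiableWithinAt
        · intro x hx
          rw [interior_Icc] at hx
          rw [hDval x (by linarith [hx.1]) (by linarith [hx.2])]
          have hQx : 2 * lam * x ^ 2 - 2 * p * x - 2 * lam * (n : ℝ) ≤ 0 :=
            le_trans (hQmono t x hx.1.le hx.2.le) hQ.le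
          have hB : (0:ℝ) ≤ (1 - x ^ 2 / (n : ℝ)) ^ (p - 1) :=
            Real.rpow_nonneg (base_nonneg x (by linarith [hx.1]) (by linarith [hx.2])) _
          exact mul_nonpos_iff.mpr (Or.inl ⟨hB, div_nonpos_of_nonpos_of_nonneg hQx hnpos.le⟩)
      have hle := hanti (Set.left_mem_Icc.mpr ht0) (Set.right_mem_Icc.mpr ht0) ht0
      have hg0 : g 0 = 1 := by simp [hgdef]
      simp only [hhdef] at hle
      rw [hΦ0, hg0] at hle
      linarith
  -- main argument
  have haI : a ∈ Set.Ioo (0:ℝ) 1 := ⟨ha, by linarith⟩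
  have hbI : b ∈ Set.Ioo (0:ℝ) 1 := ⟨by linarith, by linarith⟩
  obtain ⟨htaN, htaN'⟩ := hΦinv_mem a haI
  obtain ⟨htbN, htbN'⟩ := hΦinv_mem b hbI
  have hΦa := hΦinv a haI
  have hΦb := hΦinv b hbI
  set ta := Φinv a with htadef
  set tb := Φinv b with htbdef
  have htb0 : tb < 0 := by
    by_contra hcon
    push_neg at hcon
    have := hΦmono (Set.mem_Icc.mpr ⟨by linarith, by linarith⟩)
      (Set.mem_Icc.mpr ⟨htbN.le, htbN'.le⟩) hcon
    rw [hΦ0, hΦb] at this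
    linarith
  have htab : ta < tb := by
    by_contra hcon
    push_neg at hcon
    have := hΦmono (Set.mem_Icc.mpr ⟨htbN.le, htbN'.le⟩)
      (Set.mem_Icc.mpr ⟨htaN.le, htaN'.le⟩) hcon
    rw [hΦa, hΦb] at this
    linarith
  have hΦpos : ∀ t : ℝ, ta ≤ t → t ≤ tb → 0 < Φ t := by
    intro t h1 h2
    have := hΦmono (Set.mem_Icc.mpr ⟨htaN.le, htaN'.le⟩)
      (Set.mem_Icc.mpr ⟨by linarith, by linarith⟩) h1
    rw [hΦa] at this
    linarith
  set G : ℝ → ℝ := fun t => Real.sqrt π * Real.log (Φ t) - t with hGdef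
  have hGd : ∀ t : ℝ, ta < t → t < tb →
      HasDerivAt G (Real.sqrt π * (lam * g t / Φ t) - 1) t := by
    intro t h1 h2
    exact (((hΦd t).log (hΦpos t h1.le h2.le).ne').const_mul (Real.sqrt π)).sub
      (hasDerivAt_id t)
  have hGmono : MonotoneOn G (Set.Icc ta tb) := by
    apply monotoneOn_of_deriv_nonneg (convex_Icc _ _)
    · exact (continuousOn_const.mul
        (ContinuousOn.log hΦcont.continuousOn (fun t ht => (hΦpos t ht.1 ht.2).ne'))).sub
        continuousOn_id
    · intro x hx
      rw [interior_Icc] at hx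
      exact (hGd x hx.1 hx.2).differentiableAt.differentiableWithinAt
    · intro x hx
      rw [interior_Icc] at hx
      rw [(hGd x hx.1 hx.2).deriv]
      have hΦx := hΦpos x hx.1.le hx.2.le
      have hkey := key x (by linarith [hx.1]) (by linarith [hx.2])
      have hgx : 0 ≤ g x := g_nonneg x (by linarith [hx.1]) (by linarith [hx.2])
      have h1 : Φ x ≤ Real.sqrt π * lam * g x := by
        nlinarith [mul_nonneg (by linarith : (0:ℝ) ≤ Real.sqrt π * lam - 1 / 2) hgx]
      have h2 : Real.sqrt π * (lam * g x / Φ x) = Real.sqrt π * lam * g x / Φ x := by ring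
      rw [h2]
      rw [sub_nonneg, le_div_iff₀ hΦx]
      linarith
  have hfin := hGmono (Set.left_mem_Icc.mpr htab.le) (Set.right_mem_Icc.mpr htab.le) htab.le
  simp only [hGdef] at hfin
  rw [hΦa, hΦb] at hfin
  rw [abs_of_pos (by linarith : (0:ℝ) < tb - ta)]
  rw [Real.log_div (by linarith : b ≠ 0) (ne_of_gt ha)]
  have hexp : Real.sqrt π * (Real.log b - Real.log a) =
      Real.sqrt π * Real.log b - Real.sqrt π * Real.log a := by ring
  rw [hexp]
  linarith
end

section
/- Let $n \ge 6$ and let $\Phi_n$ be the CDF of the density $\phi_n(t) = \lambda_n(1-t^2/n)^{(n-3)/2}$ on $[-\sqrt n, \sqrt n]$, where $\lambda_n \ge 1/\sqrt{4\pi}$. Then $\Phi_n(1.5) \le 0.996$. -/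
open Real
set_option maxHeartbeats 1000000 in

theorem stmt15 (n : ℕ) (hn : 6 ≤ n) (lam : ℝ)
    (hlam : lam = (∫ u in (-Real.sqrt n)..(Real.sqrt n),
        (1 - u ^ 2 / n) ^ (((n : ℝ) - 3) / 2))⁻¹)
    (hlam_ge : lam ≥ 1 / Real.sqrt (4 * π)) :
    lam * ∫ u in (-Real.sqrt n)..(1.5 : ℝ), (1 - u ^ 2 / n) ^ (((n : ℝ) - 3) / 2) ≤
      0.996 := by
  have hn6 : (6 : ℝ) ≤ (n : ℝ) := by exact_mod_cast hn
  have hnpos : (0 : ℝ) < (n : ℝ) := by linarith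
  set p : ℝ := ((n : ℝ) - 3) / 2 with hp_def
  set f : ℝ → ℝ := fun u => (1 - u ^ 2 / n) ^ p with hf_def
  have hp_pos : 0 < p := by rw [hp_def]; linarith
  have hcont : Continuous f := by
    rw [continuous_iff_continuousAt]
    intro u
    exact (Real.continuousAt_rpow_const _ _ (Or.inr hp_pos.le)).comp
      (Continuous.continuousAt (by fun_prop))
  set s : ℝ := Real.sqrt n with hs_def
  have hs17 : (1.7 : ℝ) ≤ s := by
    rw [hs_def, show (1.7:ℝ) = Real.sqrt (1.7^2) from (Real.sqrt_sq (by norm_num)).symm]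
    exact Real.sqrt_le_sqrt (by nlinarith)
  have hs15 : (1.5 : ℝ) ≤ s := by linarith
  have hsneg : -s ≤ (1.5 : ℝ) := by linarith
  -- nonnegativity of f on [-s, s]
  have hf_nonneg : ∀ u : ℝ, -s ≤ u → u ≤ s → 0 ≤ f u := by
    intro u h1 h2
    apply Real.rpow_nonneg
    have hu2 : u ^ 2 ≤ (n : ℝ) := by
      have := sq_le_sq' h1 h2
      calc u ^ 2 ≤ s ^ 2 := this
        _ = (n : ℝ) := Real.sq_sqrt hnpos.le
    have : u ^ 2 / n ≤ 1 := by rw [div_le_one hnpos]; exact hu2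
    linarith
  -- convexity inequality
  have key : ∀ x : ℝ, 0 ≤ x → x ≤ 1/2 → Real.exp (-(2 * Real.log 2) * x) ≤ 1 - x := by
    intro x hx0 hx1
    have h := convexOn_exp.2 (Set.mem_univ (0:ℝ)) (Set.mem_univ (-Real.log 2))
      (by linarith : (0:ℝ) ≤ 1 - 2*x) (by linarith : (0:ℝ) ≤ 2*x) (by ring)
    simp only [smul_eq_mul, mul_zero, zero_add, Real.exp_zero, mul_one] at h
    have he : Real.exp (-Real.log 2) = 2⁻¹ := by
      rw [Real.exp_neg, Real.exp_log (by norm_num : (0:ℝ) < 2)]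
    rw [he] at h
    have : (2*x) * -Real.log 2 = -(2 * Real.log 2) * x := by ring
    rw [this] at h
    linarith
  -- pointwise lower bound on [1.5, 1.7]
  have hpt : ∀ u ∈ Set.Icc (1.5:ℝ) 1.7, (1/8 : ℝ) ≤ f u := by
    intro u hu
    obtain ⟨hu1, hu2⟩ := hu
    have hu2sq : u ^ 2 ≤ 2.89 := by nlinarith
    have hx0 : (0:ℝ) ≤ u ^ 2 / n := by positivity
    have hxh : u ^ 2 / n ≤ 1/2 := by
      rw [div_le_iff₀ hnpos]; nlinarith
    have h1x := key _ hx0 hxh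
    have hstep1 : Real.exp (-(2 * Real.log 2) * (u ^ 2 / n)) ^ p ≤ f u :=
      Real.rpow_le_rpow (Real.exp_nonneg _) h1x hp_pos.le
    have hstep2 : Real.exp (-(2 * Real.log 2) * (u ^ 2 / n)) ^ p
        = Real.exp (-(2 * Real.log 2) * (u ^ 2 / n) * p) := (Real.exp_mul _ _).symm
    have hlog2 : (0:ℝ) < Real.log 2 := Real.log_pos (by norm_num)
    have hxp : (u ^ 2 / n) * p ≤ 3/2 := by
      rw [hp_def, div_mul_div_comm, div_le_iff₀ (by positivity)]
      nlinarith
    have hmono : Real.exp (-(3 * Real.log 2)) ≤ Real.exp (-(2 * Real.log 2) * (u ^ 2 / n) * p) := by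
      apply Real.exp_le_exp.mpr
      nlinarith
    have h8 : Real.exp (-(3 * Real.log 2)) = 1/8 := by
      rw [Real.exp_neg, show (3:ℝ) * Real.log 2 = Real.log (2^(3:ℕ)) by
        rw [Real.log_pow]; push_cast; ring, Real.exp_log (by norm_num)]
      norm_num
    rw [hstep2] at hstep1
    linarith [hstep1, hmono, h8.symm.le]
  -- integrability
  have hint : ∀ a b : ℝ, IntervalIntegrable f MeasureTheory.volume a b :=
    fun a b => hcont.intervalIntegrable a b
  -- lower bound on middle integral
  have h1 : (0.025 : ℝ) ≤ ∫ u in (1.5:ℝ)..(1.7:ℝ), f u := by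
    have hc : (∫ _u in (1.5:ℝ)..(1.7:ℝ), (1/8:ℝ)) = 0.025 := by
      rw [intervalIntegral.integral_const]; norm_num
    calc (0.025:ℝ) = ∫ _u in (1.5:ℝ)..(1.7:ℝ), (1/8:ℝ) := hc.symm
      _ ≤ ∫ u in (1.5:ℝ)..(1.7:ℝ), f u :=
        intervalIntegral.integral_mono_on (by norm_num) (intervalIntegrable_const)
          (hint _ _) hpt
  have h2 : (0:ℝ) ≤ ∫ u in (1.7:ℝ)..s, f u := by
    apply intervalIntegral.integral_nonneg hs17
    intro u hu
    exact hf_nonneg u (by linarith [hu.1]) hu.2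
  have h3 : (0:ℝ) ≤ ∫ u in (-s)..(1.5:ℝ), f u := by
    apply intervalIntegral.integral_nonneg hsneg
    intro u hu
    exact hf_nonneg u hu.1 (by linarith [hu.2])
  have hsplit2 : (∫ u in (1.5:ℝ)..(1.7:ℝ), f u) + (∫ u in (1.7:ℝ)..s, f u)
      = ∫ u in (1.5:ℝ)..s, f u :=
    intervalIntegral.integral_add_adjacent_intervals (hint _ _) (hint _ _)
  have htail : (0.025:ℝ) ≤ ∫ u in (1.5:ℝ)..s, f u := by linarith
  have hsplit : (∫ u in (-s)..(1.5:ℝ), f u) + (∫ u in (1.5:ℝ)..s, f u)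
      = ∫ u in (-s)..s, f u :=
    intervalIntegral.integral_add_adjacent_intervals (hint _ _) (hint _ _)
  set T : ℝ := ∫ u in (-s)..s, f u with hT_def
  have hTpos : (0:ℝ) < T := by rw [← hsplit]; linarith
  have hlamT : lam * T = 1 := by
    rw [hlam]; exact inv_mul_cancel₀ hTpos.ne'
  -- lam bounds
  have hsqrt : Real.sqrt (4 * π) ≤ 6.25 := by
    rw [show (6.25:ℝ) = Real.sqrt (6.25^2) from (Real.sqrt_sq (by norm_num)).symm]
    exact Real.sqrt_le_sqrt (by nlinarith [Real.pi_lt_d2])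
  have hsqrt_pos : (0:ℝ) < Real.sqrt (4 * π) :=
    Real.sqrt_pos.mpr (by positivity)
  have hlam016 : (0.16:ℝ) ≤ lam := by
    have : (1:ℝ)/6.25 ≤ 1 / Real.sqrt (4*π) :=
      one_div_le_one_div_of_le hsqrt_pos hsqrt
    have h625 : (1:ℝ)/6.25 = 0.16 := by norm_num
    linarith [hlam_ge]
  have hlamtail : (0.004:ℝ) ≤ lam * ∫ u in (1.5:ℝ)..s, f u := by
    calc (0.004:ℝ) = 0.16 * 0.025 := by norm_num
      _ ≤ lam * ∫ u in (1.5:ℝ)..s, f u := by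
          apply mul_le_mul hlam016 htail (by norm_num) (by linarith)
  have hfin : lam * (∫ u in (-s)..(1.5:ℝ), f u)
      = 1 - lam * ∫ u in (1.5:ℝ)..s, f u := by
    calc lam * (∫ u in (-s)..(1.5:ℝ), f u)
        = lam * ((∫ u in (-s)..(1.5:ℝ), f u) + (∫ u in (1.5:ℝ)..s, f u))
          - lam * ∫ u in (1.5:ℝ)..s, f u := by ring
      _ = lam * T - lam * ∫ u in (1.5:ℝ)..s, f u := by rw [hsplit]
      _ = 1 - lam * ∫ u in (1.5:ℝ)..s, f u := by rw [hlamT]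
  linarith [hfin, hlamtail]
end
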